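/- arXiv:2305.08065 — 5 statements merged into one kernel-verified Lean document; each statement's English description precedes it below -/
import Mathlib

section
/- Let L ≤ ℤ^d be a subgroup of full rank d that is characteristic, i.e. preserved by every automorphism of ℤ^d. Then L = ℓ·ℤ^d for some positive integer ℓ. -/
/-- A characteristic subgroup of `ℤ^d` of full rank `d` is `ℓ·ℤ^d` for some positive `ℓ`. -/
theorem characteristic_full_rank_subgroup_eq_smul (d : ℕ) (L : Submodule ℤ (Fin d → ℤ))
    (hrank : Module.finrank ℤ L = d)
    (hchar : ∀ φ : (Fin d → ℤ) ≃ₗ[ℤ] (Fin d → ℤ), L.map φ.toLinearMap = L) :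
    ∃ ℓ : ℕ, 0 < ℓ ∧ ∀ x : Fin d → ℤ, x ∈ L ↔ ∃ y : Fin d → ℤ, x = (ℓ : ℤ) • y := by
  rcases d with _ | n
  · refine ⟨1, one_pos, fun x => ⟨fun _ => ⟨x, by simp⟩, fun _ => ?_⟩⟩
    have hx0 : x = 0 := Subsingleton.elim x 0
    rw [hx0]; exact L.zero_mem
  -- projections of L onto all coordinates agree
  have hproj : ∀ i : Fin (n+1), L.map (LinearMap.proj i) = L.map (LinearMap.proj 0) := by
    intro i
    set e := LinearEquiv.funCongrLeft ℤ ℤ (Equiv.swap (0 : Fin (n+1)) i) with he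
    have hcomp : (LinearMap.proj 0).comp e.toLinearMap
        = (LinearMap.proj i : (Fin (n+1) → ℤ) →ₗ[ℤ] ℤ) := by
      apply LinearMap.ext
      intro x
      simp [he, LinearEquiv.funCongrLeft_apply, Equiv.swap_apply_left]
    calc L.map (LinearMap.proj i)
        = L.map ((LinearMap.proj 0).comp e.toLinearMap) := by rw [hcomp]
      _ = (L.map e.toLinearMap).map (LinearMap.proj 0) := Submodule.map_comp _ _ L
      _ = L.map (LinearMap.proj 0) := by rw [hchar e]
  obtain ⟨a, ha⟩ : ∃ a : ℤ, L.map (LinearMap.proj (0 : Fin (n+1))) = Submodule.span ℤ {a} :=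
    ⟨_, (Submodule.IsPrincipal.span_singleton_generator _).symm⟩
  have hdvd : ∀ x ∈ L, ∀ i, a ∣ x i := by
    intro x hx i
    have hmem : x i ∈ Submodule.span ℤ {a} := by
      rw [← ha, ← hproj i]; exact ⟨x, hx, rfl⟩
    obtain ⟨c, hc⟩ := Submodule.mem_span_singleton.mp hmem
    exact ⟨c, by rw [← hc, smul_eq_mul, mul_comm]⟩
  have ha0 : a ≠ 0 := by
    intro h
    have hLbot : L = ⊥ := by
      rw [eq_bot_iff]
      intro x hx
      have hz : ∀ i, x i = 0 := fun i => zero_dvd_iff.mp (h ▸ hdvd x hx i)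
      have : x = 0 := funext hz
      simp [this]
    rw [hLbot] at hrank
    simp [finrank_bot] at hrank
  -- get an element of L with first coordinate a
  obtain ⟨v, hv, hv0⟩ : ∃ v ∈ L, v 0 = a := by
    have : a ∈ L.map (LinearMap.proj (0 : Fin (n+1))) := by
      rw [ha]; exact Submodule.mem_span_singleton_self a
    obtain ⟨v, hv, hv0⟩ := this
    exact ⟨v, hv, hv0⟩
  choose c hc using fun j => hdvd v hv j
  -- shear automorphism sending v to a • e₀
  set w : Fin (n+1) → ℤ := fun j => if j = 0 then 0 else c j with hw
  have hw0 : w 0 = 0 := if_pos rfl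
  set f : (Fin (n+1) → ℤ) →ₗ[ℤ] (Fin (n+1) → ℤ) :=
    LinearMap.id - (LinearMap.proj 0).smulRight w with hf
  set g : (Fin (n+1) → ℤ) →ₗ[ℤ] (Fin (n+1) → ℤ) :=
    LinearMap.id + (LinearMap.proj 0).smulRight w with hg
  have hfapp : ∀ x : Fin (n+1) → ℤ, f x = x - (x 0) • w := fun x => by
    simp [hf]
  have hgapp : ∀ x : Fin (n+1) → ℤ, g x = x + (x 0) • w := fun x => by
    simp [hg]
  have hfx0 : ∀ x : Fin (n+1) → ℤ, (f x) 0 = x 0 := fun x => by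
    rw [hfapp]; simp [hw0]
  have hgx0 : ∀ x : Fin (n+1) → ℤ, (g x) 0 = x 0 := fun x => by
    rw [hgapp]; simp [hw0]
  have hgf : g.comp f = LinearMap.id := by
    apply LinearMap.ext
    intro x
    simp only [LinearMap.comp_apply, LinearMap.id_apply]
    rw [hgapp, hfx0, hfapp]
    abel
  have hfg : f.comp g = LinearMap.id := by
    apply LinearMap.ext
    intro x
    simp only [LinearMap.comp_apply, LinearMap.id_apply]
    rw [hfapp, hgx0, hgapp]
    abel
  set φ : (Fin (n+1) → ℤ) ≃ₗ[ℤ] (Fin (n+1) → ℤ) := LinearEquiv.ofLinear f g hfg hgf with hφ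
  have hφv : φ v = a • Pi.single (0 : Fin (n+1)) (1 : ℤ) := by
    funext j
    have : φ v = f v := rfl
    rw [this, hfapp]
    by_cases hj : j = 0
    · subst hj
      simp [hw0, hv0, Pi.single_apply]
    · simp only [Pi.sub_apply, Pi.smul_apply, smul_eq_mul, Pi.smul_apply]
      rw [hw]
      simp only [hj, if_neg hj, Pi.single_apply]
      rw [hv0, hc j]
      simp [hj, mul_comm, Ne.symm hj]
  have h0 : a • Pi.single (0 : Fin (n+1)) (1 : ℤ) ∈ L := by
    rw [← hφv, ← hchar φ]
    exact ⟨v, hv, rfl⟩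
  have hsingle : ∀ i : Fin (n+1), a • Pi.single i (1 : ℤ) ∈ L := by
    intro i
    set ψ := LinearEquiv.funCongrLeft ℤ ℤ (Equiv.swap (0 : Fin (n+1)) i) with hψ
    have hψs : ψ (a • Pi.single (0 : Fin (n+1)) (1 : ℤ)) = a • Pi.single i (1 : ℤ) := by
      funext j
      simp only [hψ, LinearEquiv.funCongrLeft_apply, Function.comp_apply, Pi.smul_apply,
        smul_eq_mul, Pi.single_apply]
      by_cases hj : j = i
      · subst hj; simp [Equiv.swap_apply_right]
      · have : Equiv.swap (0 : Fin (n+1)) i j ≠ 0 := by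
          intro h
          have := (Equiv.swap (0 : Fin (n+1)) i).injective (a₁ := j) (a₂ := i)
          apply hj
          apply this
          rw [h, Equiv.swap_apply_right]
        simp [this, hj]
    rw [← hψs, ← hchar ψ]
    exact ⟨_, h0, rfl⟩
  have hsmul : ∀ y : Fin (n+1) → ℤ, a • y ∈ L := by
    intro y
    have hy : a • y = ∑ i : Fin (n+1), y i • (a • Pi.single i (1 : ℤ)) := by
      funext j
      simp only [Pi.smul_apply, smul_eq_mul, Finset.sum_apply, Pi.single_apply]
      simp [mul_ite, Finset.sum_ite_eq, mul_comm]
    rw [hy]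
    exact Submodule.sum_mem _ fun i _ => Submodule.smul_mem _ _ (hsingle i)
  refine ⟨a.natAbs, Int.natAbs_pos.mpr ha0, fun x => ⟨?_, ?_⟩⟩
  · intro hx
    have hd : ∀ i, ((a.natAbs : ℤ)) ∣ x i := fun i => (Int.natAbs_dvd).mpr (hdvd x hx i)
    choose y hy using hd
    exact ⟨y, funext fun i => by rw [hy i]; rfl⟩
  · rintro ⟨y, rfl⟩
    rcases Int.natAbs_eq a with h | h
    · rw [← h]; exact hsmul y
    · have : ((a.natAbs : ℤ)) • y = a • (-y) := by rw [h]; simp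
      rw [this]; exact hsmul (-y)
end

section
/- Let d ≥ 3 and let L ≤ ℤ^d be a full-rank subgroup such that every orientation-preserving automorphism of L extends to an orientation-preserving automorphism of ℤ^d (under the inclusion L ⊆ ℤ^d). Then L = ℓ·ℤ^d for some positive integer ℓ. -/
/-!
Smith normal form gives bases `b` of `ℤ^d` and `bL` of `L` with `bL i = a i • b i`. For `k ≠ l`
the transvection `bL l ↦ bL k + bL l` of `L` has determinant one, and any extension `Ψ` of it
to `ℤ^d` satisfies `a l • Ψ (b l) = a k • b k + a l • b l`; the `k`-th coordinate gives
`a l ∣ a k`. So all the `a i` are associated to one `ℓ > 0`, and then `L = ℓ • ℤ^d`.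
-/

namespace Module.Basis

variable {R M ι : Type*} [CommRing R] [AddCommGroup M] [Module R M]

theorem exists_det_eq_one_apply_eq_add [Fintype ι] [DecidableEq ι] (b : Basis ι R M) {k l : ι}
    (hkl : k ≠ l) :
    ∃ ψ : M ≃ₗ[R] M, LinearMap.det ψ.toLinearMap = 1 ∧ ψ (b l) = b k + b l := by
  have hdet := Matrix.det_transvection_of_ne k l hkl (1 : R)
  refine ⟨Matrix.toLinearEquiv b _ (hdet ▸ isUnit_one), ?_, ?_⟩
  · exact (LinearMap.det_toLin b _).trans hdet
  · simp [Matrix.transvection, Matrix.single_apply, add_comm]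

variable {N : Submodule R M} (b : Basis ι R M) (bN : Basis ι R N) {a : ι → R}

theorem dvd_of_map_eq_add (hab : ∀ i, (bN i : M) = a i • b i) {Ψ : M →ₗ[R] M} {k l : ι}
    (hkl : k ≠ l) (hΨ : Ψ (bN l) = bN k + bN l) : a l ∣ a k := by
  classical
  have hk := congrArg (fun v => b.repr v k) hΨ
  simp only [hab, map_smul, map_add, b.repr_self, Finsupp.add_apply, Finsupp.smul_apply,
    Finsupp.single_apply, if_neg hkl.symm, smul_eq_mul] at hk
  exact ⟨_, by simpa using hk.symm⟩

theorem dvd_of_forall_extends [Fintype ι] (hab : ∀ i, (bN i : M) = a i • b i)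
    (hext : ∀ ψ : N ≃ₗ[R] N, LinearMap.det ψ.toLinearMap = 1 →
      ∃ Ψ : M →ₗ[R] M, ∀ x : N, Ψ x = ψ x) (l k : ι) : a l ∣ a k := by
  classical
  rcases eq_or_ne k l with rfl | hkl
  · rfl
  obtain ⟨ψ, hdet, hψ⟩ := bN.exists_det_eq_one_apply_eq_add hkl
  obtain ⟨Ψ, hΨ⟩ := hext ψ hdet
  exact dvd_of_map_eq_add b bN hab hkl (by rw [hΨ, hψ, Submodule.coe_add])

theorem mem_iff_exists_eq_smul_of_associated (hab : ∀ i, (bN i : M) = a i • b i) {c : R}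
    (hc : ∀ i, Associated c (a i)) (x : M) : x ∈ N ↔ ∃ y, x = c • y := by
  have hle_range : ⊤ ≤ (LinearMap.range (c • LinearMap.id : M →ₗ[R] M)).comap N.subtype := by
    rw [← bN.span_eq, Submodule.span_le]
    rintro _ ⟨i, rfl⟩
    obtain ⟨u, hu⟩ := hc i
    exact ⟨(u : R) • b i, by simp [hab, ← hu, mul_smul, smul_comm c]⟩
  have hle_comap : ⊤ ≤ N.comap (c • LinearMap.id : M →ₗ[R] M) := by
    rw [← b.span_eq, Submodule.span_le]
    rintro _ ⟨i, rfl⟩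
    obtain ⟨u, hu⟩ := hc i
    have hbi : c • b i = (↑u⁻¹ : R) • (bN i : M) := by
      rw [hab, ← hu, smul_smul, mul_comm c, ← mul_assoc, Units.inv_mul, one_mul]
    change c • b i ∈ N
    rw [hbi]
    exact N.smul_mem _ (bN i).2
  refine ⟨fun hx => ?_, ?_⟩
  · obtain ⟨y, hy⟩ := hle_range (Submodule.mem_top (x := (⟨x, hx⟩ : N)))
    exact ⟨y, by simpa using hy.symm⟩
  · rintro ⟨y, rfl⟩
    exact hle_comap (Submodule.mem_top (x := y))

end Module.Basis

theorem Int.exists_natCast_associated_of_dvd {ι : Type*} {a : ι → ℤ} (ha : ∀ i, a i ≠ 0)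
    (hdvd : ∀ i j, a i ∣ a j) : ∃ ℓ : ℕ, 0 < ℓ ∧ ∀ i, Associated (ℓ : ℤ) (a i) := by
  rcases isEmpty_or_nonempty ι with hι | ⟨⟨i₀⟩⟩
  · exact ⟨1, one_pos, isEmptyElim⟩
  · exact ⟨(a i₀).natAbs, Int.natAbs_pos.2 (ha i₀), fun i =>
      (Int.associated_natAbs _).symm.trans (associated_of_dvd_dvd (hdvd i₀ i) (hdvd i i₀))⟩

theorem extension_property_implies_homothety_general (d : ℕ)
    (L : Submodule ℤ (Fin d → ℤ)) (hrank : Module.finrank ℤ L = d)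
    (hext : ∀ ψ : L ≃ₗ[ℤ] L, LinearMap.det ψ.toLinearMap = 1 →
      ∃ Ψ : (Fin d → ℤ) ≃ₗ[ℤ] (Fin d → ℤ), LinearMap.det Ψ.toLinearMap = 1 ∧
        ∀ x : L, Ψ (x : Fin d → ℤ) = ((ψ x : L) : Fin d → ℤ)) :
    ∃ ℓ : ℕ, 0 < ℓ ∧ ∀ x : Fin d → ℤ, x ∈ L ↔ ∃ y : Fin d → ℤ, x = (ℓ : ℤ) • y := by
  obtain ⟨b, a, bL, hab⟩ := L.exists_smith_normal_form_of_rank_eq (Pi.basisFun ℤ (Fin d))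
    (by simp [hrank])
  have ha : ∀ i, a i ≠ 0 := fun i hi => bL.ne_zero i (Subtype.ext (by simp [hab, hi]))
  have hdvd : ∀ i j, a i ∣ a j := b.dvd_of_forall_extends bL hab fun ψ hψ =>
    let ⟨Ψ, _, hΨ⟩ := hext ψ hψ
    ⟨Ψ, hΨ⟩
  obtain ⟨ℓ, hℓ, hassoc⟩ := Int.exists_natCast_associated_of_dvd ha hdvd
  exact ⟨ℓ, hℓ, b.mem_iff_exists_eq_smul_of_associated bL hab hassoc⟩

/-- Let `d ≥ 3` and let `L ≤ ℤ^d` be a full-rank subgroup such that every orientation-preserving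
automorphism of `L` extends to an orientation-preserving automorphism of `ℤ^d`.
Then `L = ℓ·ℤ^d` for some positive integer `ℓ`. -/
theorem extension_property_implies_homothety (d : ℕ) (hd : 3 ≤ d)
    (L : Submodule ℤ (Fin d → ℤ)) (hrank : Module.finrank ℤ L = d)
    (hext : ∀ ψ : L ≃ₗ[ℤ] L, LinearMap.det ψ.toLinearMap = 1 →
      ∃ Ψ : (Fin d → ℤ) ≃ₗ[ℤ] (Fin d → ℤ), LinearMap.det Ψ.toLinearMap = 1 ∧
        ∀ x : L, Ψ (x : Fin d → ℤ) = ((ψ x : L) : Fin d → ℤ)) :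
    ∃ ℓ : ℕ, 0 < ℓ ∧ ∀ x : Fin d → ℤ, x ∈ L ↔ ∃ y : Fin d → ℤ, x = (ℓ : ℤ) • y :=
  extension_property_implies_homothety_general d L hrank hext
end

section
/- Let H, H' be hyperplanes and L ⊆ H, L' ⊆ H' lines in ℂ^d, and let u = id + Π and u' = id + Π' where Π, Π' are rank-1 operators with kernels H, H' and images L, L' respectively. If L ⊆ H' and L' ⊄ H, then the commutator [u, u'] = u u' u⁻¹ u'⁻¹ equals id + c·Π'' for some nonzero scalar c, where Π'' is a rank-1 operator with kernel H' and image L. -/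
/-- A nonzero vector of a 1-dimensional submodule spans it. -/
lemma span_eq_of_mem_line {V : Type*} [AddCommGroup V] [Module ℂ V] [FiniteDimensional ℂ V]
    (L : Submodule ℂ V) (hL : Module.finrank ℂ L = 1) {v : V} (hv : v ∈ L) (hv0 : v ≠ 0) :
    (Submodule.span ℂ {v} : Submodule ℂ V) = L := by
  apply Submodule.eq_of_le_of_finrank_le (Submodule.span_le.2 (by simpa using hv))
  rw [finrank_span_singleton hv0, hL]

/-- Commutator relation for unipotent rank-1 perturbations of the identity: if `u = id + P` and
`u' = id + P'` with `P, P'` rank-1 operators with kernels the hyperplanes `H, H'` and images the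
lines `L ⊆ H, L' ⊆ H'`, and if `L ⊆ H'` and `L' ⊄ H`, then `[u, u'] = id + c·P''` for a nonzero
scalar `c` and a rank-1 operator `P''` with kernel `H'` and image `L`. -/
theorem commutator_of_rank_one_unipotents (d : ℕ)
    (H H' L L' : Submodule ℂ (Fin d → ℂ))
    (hH : Module.finrank ℂ H = d - 1) (hH' : Module.finrank ℂ H' = d - 1)
    (hL : Module.finrank ℂ L = 1) (hL' : Module.finrank ℂ L' = 1)
    (hLH : L ≤ H) (hL'H' : L' ≤ H')
    (P P' : Module.End ℂ (Fin d → ℂ))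
    (hPker : LinearMap.ker P = H) (hPrange : LinearMap.range P = L)
    (hP'ker : LinearMap.ker P' = H') (hP'range : LinearMap.range P' = L')
    (h1 : L ≤ H') (h2 : ¬ L' ≤ H) :
    ∃ c : ℂ, c ≠ 0 ∧ ∃ P'' : Module.End ℂ (Fin d → ℂ),
      LinearMap.ker P'' = H' ∧ LinearMap.range P'' = L ∧
      (1 + P) * (1 + P') * Ring.inverse (1 + P) * Ring.inverse (1 + P') = 1 + c • P'' := by
  -- nilpotency relations
  have hPP : P * P = 0 := by
    apply LinearMap.ext; intro x
    have : P x ∈ LinearMap.ker P := by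
      rw [hPker]; exact hLH (hPrange ▸ LinearMap.mem_range_self P x)
    simpa [Module.End.mul_apply] using this
  have hP'P' : P' * P' = 0 := by
    apply LinearMap.ext; intro x
    have : P' x ∈ LinearMap.ker P' := by
      rw [hP'ker]; exact hL'H' (hP'range ▸ LinearMap.mem_range_self P' x)
    simpa [Module.End.mul_apply] using this
  have hP'P : P' * P = 0 := by
    apply LinearMap.ext; intro x
    have : P x ∈ LinearMap.ker P' := by
      rw [hP'ker]; exact h1 (hPrange ▸ LinearMap.mem_range_self P x)
    simpa [Module.End.mul_apply] using this
  -- inverses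
  have hinv : ∀ Q : Module.End ℂ (Fin d → ℂ), Q * Q = 0 → Ring.inverse (1 + Q) = 1 - Q := by
    intro Q hQ
    have ha : (1 + Q) * (1 - Q) = 1 := by
      rw [add_mul, one_mul, mul_sub, mul_one, hQ]; abel
    have hb : (1 - Q) * (1 + Q) = 1 := by
      rw [sub_mul, one_mul, mul_add, mul_one, hQ]; abel
    exact Ring.inverse_unit ⟨1 + Q, 1 - Q, ha, hb⟩
  rw [hinv P hPP, hinv P' hP'P']
  refine ⟨1, one_ne_zero, P * P', ?_, ?_, ?_⟩
  · -- kernel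
    rw [← hP'ker]
    apply le_antisymm
    · intro x hx
      simp only [LinearMap.mem_ker, Module.End.mul_apply] at hx
      by_contra hx0
      have hx0' : P' x ≠ 0 := fun h => hx0 (by simpa [LinearMap.mem_ker] using h)
      have hmem : P' x ∈ L' := hP'range ▸ LinearMap.mem_range_self P' x
      have hmemH : P' x ∈ H := hPker ▸ hx
      exact h2 ((span_eq_of_mem_line L' hL' hmem hx0') ▸
        Submodule.span_le.2 (by simpa using hmemH))
    · intro x hx
      simp only [LinearMap.mem_ker] at hx ⊢
      simp [Module.End.mul_apply, hx]
  · -- range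
    rw [Module.End.mul_eq_comp, LinearMap.range_comp]
    apply le_antisymm
    · rw [← hPrange]; exact LinearMap.map_le_range
    · obtain ⟨v, hvL', hvH⟩ : ∃ v ∈ L', v ∉ H := Set.not_subset.1 (fun h => h2 h)
      have hPv : P v ≠ 0 := fun h => hvH (hPker ▸ LinearMap.mem_ker.2 h)
      have hspan : (Submodule.span ℂ {P v} : Submodule ℂ (Fin d → ℂ)) = L :=
        span_eq_of_mem_line L hL (hPrange ▸ LinearMap.mem_range_self P v) hPv
      rw [← hspan]
      apply Submodule.span_le.2
      rintro _ rfl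
      exact Submodule.mem_map.2 ⟨v, hP'range ▸ hvL', rfl⟩
  · -- the algebra
    rw [one_smul]
    have e1 : (1 + P') * (1 - P) = 1 + P' - P := by
      rw [add_mul, one_mul, mul_sub, mul_one, hP'P]; abel
    have e2 : (1 + P) * (1 + P' - P) = 1 + P' + P * P' := by
      rw [add_mul, one_mul, mul_sub, mul_add, mul_one, hPP]; abel
    have e3 : (1 + P' + P * P') * (1 - P') = 1 + P * P' := by
      rw [mul_sub, mul_one, add_mul, add_mul, one_mul, mul_assoc P P' P', hP'P',
        mul_zero]; abel
    rw [mul_assoc (1 + P) (1 + P') (1 - P), e1, e2, e3]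
end

section
/- Let φ : U_3 → GL_2(ℂ) be a group homomorphism from the group of 3×3 unipotent upper triangular integer matrices such that φ(E_{12}), φ(E_{23}), φ(E_{13}) are all unipotent. Then φ(E_{13}) = id. -/
/-- The elementary matrix `E i j` (for `i ≠ j`) in `SL_d(ℤ)`. -/
def Emat (d : ℕ) (i j : Fin d) (h : i ≠ j) : Matrix.SpecialLinearGroup (Fin d) ℤ :=
  ⟨Matrix.transvection i j 1, Matrix.det_transvection_of_ne i j h 1⟩

/-- The subgroup `U_d ≤ SL_d(ℤ)` of unipotent upper triangular matrices, i.e. the subgroup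
generated by the elementary matrices `E i j` with `i < j`. -/
def unipotentUpper (d : ℕ) : Subgroup (Matrix.SpecialLinearGroup (Fin d) ℤ) :=
  Subgroup.closure { A | ∃ (i j : Fin d) (h : i < j), A = Emat d i j h.ne }

/-- The elementary matrix `E i j` (for `i < j`) as an element of `U_d`. -/
def EU (d : ℕ) (i j : Fin d) (h : i < j) : unipotentUpper d :=
  ⟨Emat d i j h.ne, Subgroup.subset_closure ⟨i, j, h, rfl⟩⟩

/-!
Write `E₁₃ = [E₁₂, E₂₃]` and let `C = [A, B]` be its image; `C` commutes with `A` and `B`.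
In the coordinates `(m₀₁, m₁₀, m₀₀ - m₁₁)` of the traceless part, the entries of `MN - NM` for
two `2 × 2` matrices are the components of the cross product of their coordinate vectors. So if `C` is not scalar, the
coordinates of `A` and `B` are both multiples of those of `C`, and `A`, `B` commute, i.e. `C = 1`.
If `C` is scalar, it is `1` because `C - 1` is nilpotent.
-/

open Matrix
open scoped commutatorElement

theorem exists_smul_eq_of_cross_eq_zero {K : Type*} [Field K] {u v : Fin 3 → K} (hv : v ≠ 0)
    (h : u ⨯₃ v = 0) : ∃ t : K, t • v = u := by
  have hdep : ¬LinearIndependent K ![v, u] := by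
    rw [← crossProduct_ne_zero_iff_linearIndependent, not_not, ← cross_anticomm, h, neg_zero]
  simpa [LinearIndependent.pair_iff' hv] using hdep

namespace Matrix

variable {R : Type*} [CommRing R]

def tracelessCoords (A : Matrix (Fin 2) (Fin 2) R) : Fin 3 → R :=
  ![A 0 1, A 1 0, A 0 0 - A 1 1]

theorem mul_sub_mul_fin_two (A B : Matrix (Fin 2) (Fin 2) R) :
    A * B - B * A =
      !![(tracelessCoords A ⨯₃ tracelessCoords B) 2,
          (tracelessCoords A ⨯₃ tracelessCoords B) 1;
        (tracelessCoords A ⨯₃ tracelessCoords B) 0,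
          -(tracelessCoords A ⨯₃ tracelessCoords B) 2] := by
  ext i j
  fin_cases i <;> fin_cases j <;>
    simp only [tracelessCoords, cross_apply, sub_apply, mul_apply, Fin.sum_univ_two, of_apply,
      cons_val', cons_val, cons_val_zero, cons_val_one, cons_val_fin_one, Fin.zero_eta, Fin.mk_one,
      Fin.isValue] <;> ring

theorem commute_iff_cross_tracelessCoords_eq_zero {A B : Matrix (Fin 2) (Fin 2) R} :
    Commute A B ↔ tracelessCoords A ⨯₃ tracelessCoords B = 0 := by
  rw [Commute, SemiconjBy, ← sub_eq_zero, mul_sub_mul_fin_two]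
  constructor
  · intro h
    ext i
    fin_cases i
    exacts [by simpa using congrFun₂ h 1 0, by simpa using congrFun₂ h 0 1,
      by simpa using congrFun₂ h 0 0]
  · intro h
    ext i j
    fin_cases i <;> fin_cases j <;> simp [h]

theorem mem_range_scalar_of_tracelessCoords_eq_zero {A : Matrix (Fin 2) (Fin 2) R}
    (h : tracelessCoords A = 0) : A ∈ Set.range (scalar (Fin 2)) := by
  have h01 : A 0 1 = 0 := congrFun h 0
  have h10 : A 1 0 = 0 := congrFun h 1
  have h11 : A 1 1 = A 0 0 := (sub_eq_zero.1 (congrFun h 2)).symm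
  refine ⟨A 0 0, ?_⟩
  ext i j
  fin_cases i <;> fin_cases j <;> simp [h01, h10, h11]

theorem commute_of_commute_of_notMem_range_scalar {K : Type*} [Field K]
    {N A B : Matrix (Fin 2) (Fin 2) K} (hN : N ∉ Set.range (scalar (Fin 2)))
    (hA : Commute A N) (hB : Commute B N) : Commute A B := by
  have hv : tracelessCoords N ≠ 0 := mt mem_range_scalar_of_tracelessCoords_eq_zero hN
  obtain ⟨s, hs⟩ :=
    exists_smul_eq_of_cross_eq_zero hv (commute_iff_cross_tracelessCoords_eq_zero.1 hA)
  obtain ⟨t, ht⟩ :=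
    exists_smul_eq_of_cross_eq_zero hv (commute_iff_cross_tracelessCoords_eq_zero.1 hB)
  rw [commute_iff_cross_tracelessCoords_eq_zero, ← hs, ← ht]
  simp [cross_self]

theorem eq_one_of_mem_range_scalar_of_isNilpotent_sub_one {n : Type*} [Fintype n]
    [DecidableEq n] [Nonempty n] [IsReduced R] {A : Matrix n n R} (hA : A ∈ Set.range (scalar n))
    (h : IsNilpotent (A - 1)) : A = 1 := by
  obtain ⟨c, rfl⟩ := hA
  rw [← map_one (scalar n), ← map_sub, IsNilpotent.map_iff (fun _ _ => scalar_inj.1)] at h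
  rw [← map_one (scalar n), sub_eq_zero.1 h.eq_zero]

end Matrix

theorem Matrix.GeneralLinearGroup.commutatorElement_eq_one_of_isNilpotent_sub_one {K : Type*}
    [Field K] {g h : GL (Fin 2) K} (hg : Commute g ⁅g, h⁆) (hh : Commute h ⁅g, h⁆)
    (hu : IsNilpotent ((⁅g, h⁆ : GL (Fin 2) K) - 1 : Matrix (Fin 2) (Fin 2) K)) : ⁅g, h⁆ = 1 := by
  by_cases hN :
      ((⁅g, h⁆ : GL (Fin 2) K) : Matrix (Fin 2) (Fin 2) K) ∈ Set.range (Matrix.scalar (Fin 2))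
  · exact Units.ext (eq_one_of_mem_range_scalar_of_isNilpotent_sub_one hN hu)
  · exact commutatorElement_eq_one_iff_commute.2
      (commute_of_commute_of_notMem_range_scalar hN hg.units_val hh.units_val).units_of_val

theorem EU_zero_two_eq_commutatorElement :
    EU 3 0 2 (by decide) = ⁅EU 3 0 1 (by decide), EU 3 1 2 (by decide)⁆ := by
  rw [commutatorElement_def, eq_mul_inv_iff_mul_eq, eq_mul_inv_iff_mul_eq]
  exact Subtype.ext (Subtype.ext (by decide))

theorem commute_EU_zero_one_EU_zero_two :
    Commute (EU 3 0 1 (by decide)) (EU 3 0 2 (by decide)) :=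
  Subtype.ext (Subtype.ext (by decide))

theorem commute_EU_one_two_EU_zero_two :
    Commute (EU 3 1 2 (by decide)) (EU 3 0 2 (by decide)) :=
  Subtype.ext (Subtype.ext (by decide))

/-- If `φ : U_3 → GL_2(ℂ)` is a homomorphism such that `φ(E_{12})`, `φ(E_{23})`, `φ(E_{13})`
are all unipotent, then `φ(E_{13}) = id`. -/
theorem hom_U3_to_GL2_unipotent (φ : unipotentUpper 3 →* GL (Fin 2) ℂ)
    (h13 : IsNilpotent ((φ (EU 3 0 2 (by decide)) : Matrix (Fin 2) (Fin 2) ℂ) - 1)) :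
    φ (EU 3 0 2 (by decide)) = 1 := by
  have hx := commute_EU_zero_one_EU_zero_two.map φ
  have hy := commute_EU_one_two_EU_zero_two.map φ
  rw [EU_zero_two_eq_commutatorElement, map_commutatorElement] at hx hy h13 ⊢
  exact GeneralLinearGroup.commutatorElement_eq_one_of_isNilpotent_sub_one hx hy h13
end

section
/- Let d ≥ 3 and let φ : U_d → GL_m(ℂ) be a homomorphism with m < d from the group of unipotent upper triangular d×d integer matrices, such that φ(E_{ij}) is unipotent for all i < j. Then φ(E_{1d}) = id. -/
/-!
Suppose `N = φ(E_{1d}) - 1` is nonzero. With `a_k = E_{1k}`, `b_k = E_{kd}` (`1 < k < d`) and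
`z = E_{1d}` we have `a_k b_k = z b_k a_k`, all other pairs among `z, a_k, b_l` commuting; so the
images `X_i` of the `a_k, b_k` commute on `ker N`, and being unipotent they fix a common vector
`e = N v ≠ 0` of `ker N ∩ range N`. The vectors `c_i = (X_i - 1) v` lie in `ker N` and satisfy
`(X_i - 1) c_j - (X_j - 1) c_i = ω_ij e` for the standard symplectic form `ω` on `2(d - 2)`
coordinates. Hence the coefficient vectors of linear relations among the `c_i` modulo `e` form an
`ω`-isotropic subspace, of dimension at most `d - 2`, so `d - 1 ≤ dim ker N < m`.
-/

open Module

namespace Matrix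

variable {n R : Type*} [DecidableEq n] [Fintype n] [CommRing R]

theorem commute_transvection {i j k l : n} (hjk : j ≠ k) (hli : l ≠ i) (c d : R) :
    Commute (transvection i j c) (transvection k l d) := by
  simp only [Commute, SemiconjBy, transvection, Matrix.add_mul, Matrix.mul_add, Matrix.one_mul,
    Matrix.mul_one, single_mul_single_of_ne _ _ _ _ hjk, single_mul_single_of_ne _ _ _ _ hli]
  abel

theorem transvection_mul_transvection_of_ne {i j k : n} (hjk : j ≠ k) (hik : i ≠ k) (c d : R) :
    transvection i j c * transvection j k d =
      transvection i k (c * d) * transvection j k d * transvection i j c := by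
  simp only [transvection, Matrix.add_mul, Matrix.mul_add, Matrix.one_mul, Matrix.mul_one,
    single_mul_single_of_ne _ _ _ _ hjk.symm, single_mul_single_of_ne _ _ _ _ hik.symm,
    single_mul_single_same, Matrix.zero_mul]
  abel

end Matrix

theorem Module.End.sub_one_apply_sub_one_apply_sub {R M : Type*} [Ring R] [AddCommGroup M]
    [Module R M] (X Y : End R M) (x : M) :
    (X - 1) ((Y - 1) x) - (Y - 1) ((X - 1) x) = X (Y x) - Y (X x) := by
  simp only [LinearMap.sub_apply, Module.End.one_apply, map_sub]
  abel

theorem Submodule.exists_mem_ne_zero_apply_eq_zero_of_isNilpotent {R M : Type*} [Ring R]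
    [AddCommGroup M] [Module R M] {f : End R M} (hf : IsNilpotent f) {U : Submodule R M}
    (hU : U ≠ ⊥) (hfU : Set.MapsTo f U U) : ∃ u ∈ U, u ≠ 0 ∧ f u = 0 := by
  have : Nontrivial U := Submodule.nontrivial_iff_ne_bot.mpr hU
  obtain ⟨k, hk⟩ := Module.End.isNilpotent.restrict hfU hf
  by_contra! h
  have hinj : Function.Injective (f.restrict hfU) := by
    refine (injective_iff_map_eq_zero _).mpr fun u hu => ?_
    by_contra hu0
    exact h u u.2 (by simpa using hu0) (congrArg Subtype.val hu)
  obtain ⟨u, hu⟩ := exists_ne (0 : U)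
  exact hu (hinj.iterate k (by simp [← Module.End.coe_pow, hk]))

theorem Submodule.exists_mem_ne_zero_forall_apply_eq_zero_of_isNilpotent {R M ι : Type*}
    [Ring R] [AddCommGroup M] [Module R M] [Finite ι] {T : ι → End R M}
    (hT : ∀ i, IsNilpotent (T i))
    {W : Submodule R M} (hW : W ≠ ⊥) (hTW : ∀ i, Set.MapsTo (T i) W W)
    (hcomm : ∀ i j, ∀ x ∈ W, T i (T j x) = T j (T i x)) :
    ∃ v ∈ W, v ≠ 0 ∧ ∀ i, T i v = 0 := by
  classical
  have : Fintype ι := Fintype.ofFinite ι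
  suffices ∀ s : Finset ι, W ⊓ ⨅ i ∈ s, LinearMap.ker (T i) ≠ ⊥ by
    obtain ⟨v, hv, hv0⟩ := Submodule.exists_mem_ne_zero_of_ne_bot (this Finset.univ)
    simp only [Submodule.mem_inf, Submodule.mem_iInf, LinearMap.mem_ker] at hv
    exact ⟨v, hv.1, hv0, fun i => hv.2 i (Finset.mem_univ i)⟩
  intro s
  induction s using Finset.induction_on with
  | empty => simpa using hW
  | insert j s _ ih =>
    set U := W ⊓ ⨅ i ∈ s, LinearMap.ker (T i)
    have hTU : Set.MapsTo (T j) U U := by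
      intro x hx
      simp only [U, SetLike.mem_coe, Submodule.mem_inf, Submodule.mem_iInf,
        LinearMap.mem_ker] at hx ⊢
      exact ⟨hTW j hx.1, fun i hi => by rw [hcomm i j x hx.1, hx.2 i hi, map_zero]⟩
    obtain ⟨u, hu, hu0, hju⟩ :=
      Submodule.exists_mem_ne_zero_apply_eq_zero_of_isNilpotent (hT j) ih hTU
    refine (Submodule.ne_bot_iff _).mpr ⟨u, ?_, hu0⟩
    simp only [U, Submodule.mem_inf, Submodule.mem_iInf, LinearMap.mem_ker,
      Finset.mem_insert] at hu ⊢
    exact ⟨hu.1, fun i hi => hi.elim (fun h => h ▸ hju) (hu.2 i)⟩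

theorem LinearMap.BilinForm.two_mul_finrank_le_of_le_orthogonal {K V : Type*} [Field K]
    [AddCommGroup V] [Module K V] [FiniteDimensional K V] {B : LinearMap.BilinForm K V}
    (hB : B.Nondegenerate) {W : Submodule K V} (hW : W ≤ B.orthogonal W) :
    2 * finrank K W ≤ finrank K V := by
  have := B.finrank_orthogonal hB W
  have := Submodule.finrank_mono hW
  have := Submodule.finrank_le W
  omega

section Symplectic

variable {F V V' ι : Type*} [Field F] [AddCommGroup V] [Module F V] [AddCommGroup V']
  [Module F V'] [Fintype ι] {ω : Matrix ι ι F} {T : ι → V →ₗ[F] V'} {c : ι → V} {e' : V'}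

theorem sum_smul_apply_linearCombination_sub [DecidableEq ι]
    (hTc : ∀ i j, T i (c j) - T j (c i) = ω i j • e') (x y : ι → F) :
    ∑ i, x i • T i (Fintype.linearCombination F c y) -
      ∑ j, y j • T j (Fintype.linearCombination F c x) = ω.toBilin' x y • e' := by
  simp only [Fintype.linearCombination_apply, map_sum, map_smul, Finset.smul_sum, smul_smul,
    Matrix.toBilin'_apply, Finset.sum_smul]
  rw [Finset.sum_comm (f := fun j i => (y j * x i) • T j (c i)), ← Finset.sum_sub_distrib]
  refine Finset.sum_congr rfl fun i _ => ?_
  rw [← Finset.sum_sub_distrib]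
  refine Finset.sum_congr rfl fun j _ => ?_
  rw [mul_comm (y j), ← smul_sub, hTc, smul_smul]
  ring_nf

theorem card_add_two_le_two_mul_finrank [FiniteDimensional F V] (hω : ω.Nondegenerate) {e : V}
    (he : e ≠ 0) (he' : e' ≠ 0) (hTe : ∀ i, T i e = 0)
    (hTc : ∀ i j, T i (c j) - T j (c i) = ω i j • e') :
    Fintype.card ι + 2 ≤ 2 * finrank F V := by
  classical
  set g := (F ∙ e).mkQ ∘ₗ Fintype.linearCombination F c
  have hg : ∀ x ∈ LinearMap.ker g, ∃ a : F, Fintype.linearCombination F c x = a • e := by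
    intro x hx
    obtain ⟨a, ha⟩ := Submodule.mem_span_singleton.mp ((Submodule.Quotient.mk_eq_zero _).mp hx)
    exact ⟨a, ha.symm⟩
  have hiso : LinearMap.ker g ≤ ω.toBilin'.orthogonal (LinearMap.ker g) := by
    intro y hy x hx
    obtain ⟨a, ha⟩ := hg x hx
    obtain ⟨b, hb⟩ := hg y hy
    have := sum_smul_apply_linearCombination_sub hTc x y
    simp only [ha, hb, map_smul, hTe, smul_zero, Finset.sum_const_zero, sub_zero] at this
    exact (smul_eq_zero.mp this.symm).resolve_right he'
  have h1 := LinearMap.BilinForm.two_mul_finrank_le_of_le_orthogonal hω.toBilin' hiso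
  have h2 := g.finrank_range_add_finrank_ker
  have h3 := Submodule.finrank_le (LinearMap.range g)
  have h4 := (F ∙ e).finrank_quotient_add_finrank
  rw [finrank_span_singleton he] at h4
  simp only [finrank_fintype_fun_eq_card] at h1 h2
  omega

end Symplectic

structure IsHeisenbergFamily {M ι : Type*} [Monoid M] (z : M) (a b : ι → M) : Prop where
  commute_left : ∀ k, Commute z (a k)
  commute_right : ∀ k, Commute z (b k)
  commute_left_left : ∀ k l, Commute (a k) (a l)
  commute_right_right : ∀ k l, Commute (b k) (b l)
  commute_left_right : ∀ k l, k ≠ l → Commute (a k) (b l)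
  mul_eq : ∀ k, a k * b k = z * b k * a k

namespace IsHeisenbergFamily

section Monoid

variable {M N ι : Type*} [Monoid M] [Monoid N] {z : M} {a b : ι → M}

theorem map (h : IsHeisenbergFamily z a b) (f : M →* N) :
    IsHeisenbergFamily (f z) (f ∘ a) (f ∘ b) where
  commute_left k := (h.commute_left k).map f
  commute_right k := (h.commute_right k).map f
  commute_left_left k l := (h.commute_left_left k l).map f
  commute_right_right k l := (h.commute_right_right k l).map f
  commute_left_right k l hkl := (h.commute_left_right k l hkl).map f
  mul_eq k := by simp only [Function.comp_apply, ← map_mul, h.mul_eq]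

end Monoid

section Ring

variable {M ι : Type*} [Ring M] {z : M} {a b : ι → M}

theorem commute_sub_one_sumElim_sub_one (h : IsHeisenbergFamily z a b) (i : ι ⊕ ι) :
    Commute (z - 1) (Sum.elim a b i - 1) := by
  rcases i with k | k
  · exact ((h.commute_left k).sub_left (Commute.one_left _)).sub_right (Commute.one_right _)
  · exact ((h.commute_right k).sub_left (Commute.one_left _)).sub_right (Commute.one_right _)

end Ring

variable {F V ι : Type*} [Field F] [AddCommGroup V] [Module F V] {Z : End F V}
  {A B : ι → End F V}

theorem apply_apply_sub_apply_apply [DecidableEq ι] (h : IsHeisenbergFamily Z A B) (k l : ι)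
    (x : V) :
    A k (B l x) - B l (A k x) = if k = l then B k (A k ((Z - 1) x)) else 0 := by
  split_ifs with hkl
  · subst hkl
    have hZBA : Commute Z (B k * A k) := (h.commute_right k).mul_right (h.commute_left k)
    have := LinearMap.congr_fun (h.mul_eq k) x
    simp only [Module.End.mul_apply] at this
    rw [this, LinearMap.sub_apply, Module.End.one_apply, ← Module.End.mul_apply (B k),
      ← Module.End.mul_apply Z, hZBA.eq]
    simp only [Module.End.mul_apply, map_sub]
  · rw [sub_eq_zero, ← Module.End.mul_apply, (h.commute_left_right k l hkl).eq,
      Module.End.mul_apply]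

theorem exists_fixed_mem_ker_inf_range [Finite ι] (h : IsHeisenbergFamily Z A B)
    (hZ : IsNilpotent (Z - 1)) (hA : ∀ k, IsNilpotent (A k - 1))
    (hB : ∀ k, IsNilpotent (B k - 1)) (hZ1 : Z ≠ 1) :
    ∃ e ∈ LinearMap.ker (Z - 1) ⊓ LinearMap.range (Z - 1), e ≠ 0 ∧
      ∀ i, (Sum.elim A B i - 1) e = 0 := by
  classical
  set N := Z - 1
  set X := Sum.elim A B
  have hNX : ∀ i x, N ((X i - 1) x) = (X i - 1) (N x) := fun i x =>
    LinearMap.congr_fun (h.commute_sub_one_sumElim_sub_one i).eq x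
  have hAB : ∀ k l, ∀ x ∈ LinearMap.ker N, A k (B l x) = B l (A k x) := by
    intro k l x hx
    have := h.apply_apply_sub_apply_apply k l x
    rwa [LinearMap.mem_ker.mp hx, map_zero, map_zero, ite_self, sub_eq_zero] at this
  have hXX : ∀ i j, ∀ x ∈ LinearMap.ker N, X i (X j x) = X j (X i x) := by
    rintro (k | k) (l | l) x hx
    · exact LinearMap.congr_fun (h.commute_left_left k l).eq x
    · exact hAB k l x hx
    · exact (hAB l k x hx).symm
    · exact LinearMap.congr_fun (h.commute_right_right k l).eq x
  have hN0 : LinearMap.range N ≠ ⊥ := LinearMap.range_eq_bot.not.mpr (sub_ne_zero.mpr hZ1)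
  obtain ⟨u, hu, hu0, hNu⟩ := Submodule.exists_mem_ne_zero_apply_eq_zero_of_isNilpotent hZ hN0
    (fun x _ => LinearMap.mem_range_self N x)
  refine Submodule.exists_mem_ne_zero_forall_apply_eq_zero_of_isNilpotent
    (by rintro (k | k); exacts [hA k, hB k]) ((Submodule.ne_bot_iff _).mpr ⟨u, ⟨hNu, hu⟩, hu0⟩)
    ?_ fun i j x hx => ?_
  · rintro i x ⟨hx, y, rfl⟩
    exact ⟨by simp only [SetLike.mem_coe, LinearMap.mem_ker, hNX, LinearMap.mem_ker.mp hx,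
      map_zero], (X i - 1) y, hNX i y⟩
  · rw [← sub_eq_zero, Module.End.sub_one_apply_sub_one_apply_sub, hXX i j x hx.1, sub_self]

-- The symplectic form `ω = Jᵀ` has `ω (inl k) (inr k) = 1`, `ω (inr k) (inl k) = -1`.
theorem sub_one_apply_sub_one_apply_sub_eq_smul [DecidableEq ι] (h : IsHeisenbergFamily Z A B)
    {v : V} (hfix : ∀ i, Sum.elim A B i ((Z - 1) v) = (Z - 1) v) (i j : ι ⊕ ι) :
    (Sum.elim A B i - 1) ((Sum.elim A B j - 1) v) - (Sum.elim A B j - 1) ((Sum.elim A B i - 1) v) =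
      (Matrix.J ι F).transpose i j • (Z - 1) v := by
  have hAB : ∀ k l, A k (B l v) - B l (A k v) = if k = l then (Z - 1) v else 0 := by
    intro k l
    rw [h.apply_apply_sub_apply_apply]
    split_ifs with hkl
    · exact (congrArg (B k) (hfix (.inl k))).trans (hfix (.inr k))
    · rfl
  rcases i with k | k <;> rcases j with l | l <;>
    simp only [Module.End.sub_one_apply_sub_one_apply_sub, Matrix.J, Matrix.transpose_apply,
      Sum.elim_inl, Sum.elim_inr, Matrix.fromBlocks_apply₁₁, Matrix.fromBlocks_apply₁₂,
      Matrix.fromBlocks_apply₂₁, Matrix.fromBlocks_apply₂₂, Matrix.zero_apply, Matrix.neg_apply,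
      Matrix.one_apply, ite_smul, one_smul, zero_smul]
  · rw [← Module.End.mul_apply, (h.commute_left_left k l).eq, Module.End.mul_apply, sub_self]
  · exact (hAB k l).trans (if_congr eq_comm rfl rfl)
  · rw [neg_smul, ite_smul, one_smul, zero_smul, ← hAB l k, neg_sub]
  · rw [← Module.End.mul_apply, (h.commute_right_right k l).eq, Module.End.mul_apply, sub_self]

theorem card_add_two_le_finrank [Fintype ι] [FiniteDimensional F V]
    (h : IsHeisenbergFamily Z A B) (hZ : IsNilpotent (Z - 1)) (hA : ∀ k, IsNilpotent (A k - 1))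
    (hB : ∀ k, IsNilpotent (B k - 1)) (hZ1 : Z ≠ 1) : Fintype.card ι + 2 ≤ finrank F V := by
  classical
  obtain ⟨_, ⟨he, v, rfl⟩, he0, hXe⟩ := h.exists_fixed_mem_ker_inf_range hZ hA hB hZ1
  set N := Z - 1
  set X := Sum.elim A B
  have hNX : ∀ i x, N ((X i - 1) x) = (X i - 1) (N x) := fun i x =>
    LinearMap.congr_fun (h.commute_sub_one_sumElim_sub_one i).eq x
  have hfix : ∀ i, X i (N v) = N v := fun i => by
    simpa [sub_eq_zero] using hXe i
  have hJ : (Matrix.J ι F).transpose.Nondegenerate := Matrix.nondegenerate_of_det_ne_zero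
    (by rw [Matrix.det_transpose]; exact (Matrix.isUnit_det_J ι F).ne_zero)
  have key := card_add_two_le_two_mul_finrank hJ
    (T := fun i => (X i - 1).domRestrict (LinearMap.ker N))
    (c := fun i => ⟨(X i - 1) v, by rw [LinearMap.mem_ker, hNX, hXe]⟩) (e := ⟨N v, he⟩)
    (by simpa using he0) he0 hXe (h.sub_one_apply_sub_one_apply_sub_eq_smul hfix)
  have hker : finrank F (LinearMap.ker N) < finrank F V :=
    Submodule.finrank_lt (LinearMap.ker_eq_top.not.mpr (sub_ne_zero.mpr hZ1))
  rw [Fintype.card_sum] at key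
  omega

end IsHeisenbergFamily

theorem EU_commute {d : ℕ} {i j k l : Fin d} (hij : i < j) (hkl : k < l) (hjk : j ≠ k)
    (hli : l ≠ i) : Commute (EU d i j hij) (EU d k l hkl) :=
  Subtype.ext (Subtype.ext (Matrix.commute_transvection hjk hli 1 1).eq)

theorem EU_mul_EU {d : ℕ} {i j k : Fin d} (hij : i < j) (hjk : j < k) :
    EU d i j hij * EU d j k hjk = EU d i k (hij.trans hjk) * EU d j k hjk * EU d i j hij :=
  Subtype.ext <| Subtype.ext <|
    Matrix.transvection_mul_transvection_of_ne hjk.ne (hij.trans hjk).ne 1 1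

theorem isHeisenbergFamily_EU {d : ℕ} {i j : Fin d} (hij : i < j) :
    IsHeisenbergFamily (EU d i j hij)
      (fun k : Finset.Ioo i j => EU d i k (Finset.mem_Ioo.mp k.2).1)
      (fun k => EU d k j (Finset.mem_Ioo.mp k.2).2) where
  commute_left k := EU_commute _ _ hij.ne' (Finset.mem_Ioo.mp k.2).1.ne'
  commute_right k := EU_commute _ _ (Finset.mem_Ioo.mp k.2).2.ne' hij.ne'
  commute_left_left k l :=
    EU_commute _ _ (Finset.mem_Ioo.mp k.2).1.ne' (Finset.mem_Ioo.mp l.2).1.ne'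
  commute_right_right k l :=
    EU_commute _ _ (Finset.mem_Ioo.mp l.2).2.ne' (Finset.mem_Ioo.mp k.2).2.ne'
  commute_left_right _ _ hkl := EU_commute _ _ (Subtype.coe_ne_coe.mpr hkl) hij.ne'
  mul_eq _ := EU_mul_EU _ _

/-- Let `d ≥ 3` and `φ : U_d → GL_m(ℂ)` with `m < d` such that `φ(E_{ij})` is unipotent for all
`i < j`. Then `φ(E_{1d}) = id`. -/
theorem hom_Ud_to_small_GL_unipotent (d m : ℕ) (hd : 3 ≤ d) (hm : m < d)
    (φ : unipotentUpper d →* GL (Fin m) ℂ)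
    (hunip : ∀ (i j : Fin d) (h : i < j),
      IsNilpotent ((φ (EU d i j h) : Matrix (Fin m) (Fin m) ℂ) - 1)) :
    φ (EU d ⟨0, by omega⟩ ⟨d - 1, by omega⟩ (Fin.mk_lt_mk.mpr (by omega))) = 1 := by
  let toEnd : Matrix (Fin m) (Fin m) ℂ ≃ₐ[ℂ] End ℂ (Fin m → ℂ) := Matrix.toLinAlgEquiv'
  let ρ : unipotentUpper d →* End ℂ (Fin m → ℂ) :=
    toEnd.toRingEquiv.toMonoidHom.comp ((Units.coeHom _).comp φ)
  have hρ : ∀ i j h, IsNilpotent (ρ (EU d i j h) - 1) := fun i j h => by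
    simpa [ρ] using (hunip i j h).map toEnd
  by_contra hz
  have hρz : ρ (EU d ⟨0, by omega⟩ ⟨d - 1, by omega⟩ (Fin.mk_lt_mk.mpr (by omega))) ≠ 1 :=
    fun h1 => hz (Units.ext (toEnd.injective (by simpa [ρ] using h1)))
  have := ((isHeisenbergFamily_EU _).map ρ).card_add_two_le_finrank (hρ _ _ _)
    (fun _ => hρ _ _ _) (fun _ => hρ _ _ _) hρz
  simp only [Fintype.card_coe, Fin.card_Ioo, finrank_fin_fun] at this
  omega
end
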